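/- The map m ↦ γ·m defined by γ·(m'; m'') = (D m' - C m''; -B m' + A m'') + (diag(CᵗD); diag(AᵗB)) over 𝔽₂ defines a group action of Sp(2g,ℤ) on 𝔽₂^{2g}, in the sense that (γβ)·m = γ·(β·m) for all γ, β ∈ Sp(2g,ℤ). -/
import Mathlib


open Matrix

section ThetaAuxSec

namespace ThetaAux

variable {g : ℕ}

lemma zmod2_mul_self (x : ZMod 2) : x * x = x := by revert x; decide

/-- diagonal of a square matrix as a vector -/
def dg (M : Matrix (Fin g) (Fin g) (ZMod 2)) : Fin g → ZMod 2 := fun i => M i i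

lemma dg_add (M N : Matrix (Fin g) (Fin g) (ZMod 2)) : dg (M + N) = dg M + dg N := by
  funext i; simp [dg]

lemma dg_transpose (M : Matrix (Fin g) (Fin g) (ZMod 2)) : dg Mᵀ = dg M := by
  funext i; simp [dg]

lemma sum_symm {n : Type*} [Fintype n] [DecidableEq n] (F : n → n → ZMod 2)
    (hF : ∀ j k, F j k = F k j) :
    ∑ j, ∑ k, F j k = ∑ j, F j j := by
  rw [← Finset.sum_product']
  rw [← Finset.sum_filter_add_sum_filter_not (Finset.univ ×ˢ Finset.univ)
    (fun p => p.1 = p.2)]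
  have h1 : ∑ p ∈ (Finset.univ ×ˢ Finset.univ).filter (fun p => ¬ p.1 = p.2),
      F p.1 p.2 = 0 := by
    refine Finset.sum_involution (fun p _ => p.swap) ?_ ?_ ?_ ?_
    · intro p hp
      have : F p.swap.1 p.swap.2 = F p.1 p.2 := by
        simp [Prod.swap, hF p.2 p.1]
      rw [this]
      exact CharTwo.add_self_eq_zero _
    · intro p hp _
      simp only [Finset.mem_filter] at hp
      intro h
      apply hp.2
      have := congrArg Prod.fst h
      simp [Prod.swap] at this
      rw [← this]
    · intro p hp
      simp only [Finset.mem_filter, Finset.mem_product] at hp ⊢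
      exact ⟨⟨Finset.mem_univ _, Finset.mem_univ _⟩, fun h => hp.2 h.symm⟩
    · intro p hp; simp
  rw [h1, add_zero]
  rw [Finset.sum_filter]
  rw [Finset.sum_product]
  congr 1
  funext j
  simp [eq_comm]

lemma dg_conj (X S : Matrix (Fin g) (Fin g) (ZMod 2)) (hS : Sᵀ = S) :
    dg (X * S * Xᵀ) = X *ᵥ dg S := by
  funext i
  have expand : dg (X * S * Xᵀ) i = ∑ j, ∑ k, X i j * S j k * X i k := by
    simp only [dg, Matrix.mul_apply, Matrix.transpose_apply, Finset.sum_mul]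
    rw [Finset.sum_comm]
  have hsym : ∀ j k, X i j * S j k * X i k = X i k * S k j * X i j := by
    intro j k
    have h := congrFun (congrFun hS j) k
    rw [Matrix.transpose_apply] at h
    rw [← h]; ring
  rw [expand, sum_symm (fun j k => X i j * S j k * X i k) hsym]
  simp only [Matrix.mulVec, dotProduct, dg]
  congr 1
  funext j
  rw [mul_comm (X i j) (S j j), mul_assoc, zmod2_mul_self, mul_comm]

/-- The key diagonal identity. -/
lemma crux (P Q a' b' c' d' : Matrix (Fin g) (Fin g) (ZMod 2))
    (h1 : a' * b'ᵀ = b' * a'ᵀ) (h2 : c' * d'ᵀ = d' * c'ᵀ)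
    (h3 : a' * d'ᵀ + b' * c'ᵀ = 1) :
    dg ((P * a' + Q * c') * (P * b' + Q * d')ᵀ)
      = P *ᵥ dg (a' * b'ᵀ) + Q *ᵥ dg (c' * d'ᵀ) + dg (P * Qᵀ) := by
  have expand : (P * a' + Q * c') * (P * b' + Q * d')ᵀ
      = P * (a' * b'ᵀ) * Pᵀ + (P * (a' * d'ᵀ) * Qᵀ + (Q * (c' * b'ᵀ) * Pᵀ
        + Q * (c' * d'ᵀ) * Qᵀ)) := by
    rw [Matrix.transpose_add, Matrix.transpose_mul, Matrix.transpose_mul]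
    noncomm_ring
  rw [expand, dg_add, dg_add, dg_add]
  have hab : (a' * b'ᵀ)ᵀ = a' * b'ᵀ := by
    rw [Matrix.transpose_mul, Matrix.transpose_transpose, ← h1]
  have hcd : (c' * d'ᵀ)ᵀ = c' * d'ᵀ := by
    rw [Matrix.transpose_mul, Matrix.transpose_transpose, ← h2]
  rw [dg_conj P _ hab, dg_conj Q _ hcd]
  have hmid : dg (P * (a' * d'ᵀ) * Qᵀ) + dg (Q * (c' * b'ᵀ) * Pᵀ) = dg (P * Qᵀ) := by
    have : dg (Q * (c' * b'ᵀ) * Pᵀ) = dg (P * (b' * c'ᵀ) * Qᵀ) := by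
      rw [← dg_transpose (Q * (c' * b'ᵀ) * Pᵀ)]
      congr 1
      simp [Matrix.transpose_mul, Matrix.transpose_transpose, Matrix.mul_assoc]
    rw [this, ← dg_add, ← Matrix.add_mul, ← Matrix.mul_add, h3, Matrix.mul_one]
  rw [← hmid]
  abel


/-- helpers for char 2 vectors/matrices -/
lemma neg_vec (v : Fin g → ZMod 2) : -v = v := funext fun _ => CharTwo.neg_eq _

lemma sub_vec (u v : Fin g → ZMod 2) : u - v = u + v := by
  rw [sub_eq_add_neg, neg_vec]

lemma neg_mat (M : Matrix (Fin g) (Fin g) (ZMod 2)) : -M = M := by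
  ext i j; exact CharTwo.neg_eq _

/-- mod 2 reduction of integer matrices -/
def F (M : Matrix (Fin g) (Fin g) ℤ) : Matrix (Fin g) (Fin g) (ZMod 2) :=
  M.map (Int.cast : ℤ → ZMod 2)

lemma F_mul (M N : Matrix (Fin g) (Fin g) ℤ) : F (M * N) = F M * F N := by
  ext i j
  simp [F, Matrix.mul_apply]

lemma F_add (M N : Matrix (Fin g) (Fin g) ℤ) : F (M + N) = F M + F N := by
  ext i j; simp [F]

lemma F_transpose (M : Matrix (Fin g) (Fin g) ℤ) : F Mᵀ = (F M)ᵀ := by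
  ext i j; simp [F]

lemma F_one : F (1 : Matrix (Fin g) (Fin g) ℤ) = 1 := by
  ext i j
  by_cases h : i = j <;> simp [F, Matrix.one_apply, h]

lemma dg_F (M : Matrix (Fin g) (Fin g) ℤ) :
    (fun i => ((M i i : ℤ) : ZMod 2)) = dg (F M) := rfl

/-- block decomposition of a product -/
lemma mul_toBlocks₁₁ (M N : Matrix (Fin g ⊕ Fin g) (Fin g ⊕ Fin g) ℤ) :
    (M * N).toBlocks₁₁ = M.toBlocks₁₁ * N.toBlocks₁₁ + M.toBlocks₁₂ * N.toBlocks₂₁ := by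
  conv_lhs => rw [← Matrix.fromBlocks_toBlocks M, ← Matrix.fromBlocks_toBlocks N]
  rw [Matrix.fromBlocks_multiply, Matrix.toBlocks_fromBlocks₁₁]

lemma mul_toBlocks₁₂ (M N : Matrix (Fin g ⊕ Fin g) (Fin g ⊕ Fin g) ℤ) :
    (M * N).toBlocks₁₂ = M.toBlocks₁₁ * N.toBlocks₁₂ + M.toBlocks₁₂ * N.toBlocks₂₂ := by
  conv_lhs => rw [← Matrix.fromBlocks_toBlocks M, ← Matrix.fromBlocks_toBlocks N]
  rw [Matrix.fromBlocks_multiply, Matrix.toBlocks_fromBlocks₁₂]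

lemma mul_toBlocks₂₁ (M N : Matrix (Fin g ⊕ Fin g) (Fin g ⊕ Fin g) ℤ) :
    (M * N).toBlocks₂₁ = M.toBlocks₂₁ * N.toBlocks₁₁ + M.toBlocks₂₂ * N.toBlocks₂₁ := by
  conv_lhs => rw [← Matrix.fromBlocks_toBlocks M, ← Matrix.fromBlocks_toBlocks N]
  rw [Matrix.fromBlocks_multiply, Matrix.toBlocks_fromBlocks₂₁]

lemma mul_toBlocks₂₂ (M N : Matrix (Fin g ⊕ Fin g) (Fin g ⊕ Fin g) ℤ) :
    (M * N).toBlocks₂₂ = M.toBlocks₂₁ * N.toBlocks₁₂ + M.toBlocks₂₂ * N.toBlocks₂₂ := by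
  conv_lhs => rw [← Matrix.fromBlocks_toBlocks M, ← Matrix.fromBlocks_toBlocks N]
  rw [Matrix.fromBlocks_multiply, Matrix.toBlocks_fromBlocks₂₂]

/-- the symplectic relations between blocks -/
lemma sympl_blocks {β : Matrix (Fin g ⊕ Fin g) (Fin g ⊕ Fin g) ℤ}
    (hβ : β ∈ Matrix.symplecticGroup (Fin g) ℤ) :
    β.toBlocks₁₁ * β.toBlocks₁₂ᵀ = β.toBlocks₁₂ * β.toBlocks₁₁ᵀ ∧
    β.toBlocks₂₁ * β.toBlocks₂₂ᵀ = β.toBlocks₂₂ * β.toBlocks₂₁ᵀ ∧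
    β.toBlocks₁₁ * β.toBlocks₂₂ᵀ - β.toBlocks₁₂ * β.toBlocks₂₁ᵀ = 1 := by
  rw [SymplecticGroup.mem_iff] at hβ
  rw [← Matrix.fromBlocks_toBlocks β, Matrix.J, Matrix.fromBlocks_transpose,
    Matrix.fromBlocks_multiply, Matrix.fromBlocks_multiply] at hβ
  have h11 := congrArg Matrix.toBlocks₁₁ hβ
  have h12 := congrArg Matrix.toBlocks₁₂ hβ
  have h22 := congrArg Matrix.toBlocks₂₂ hβ
  simp only [Matrix.toBlocks_fromBlocks₁₁, Matrix.toBlocks_fromBlocks₁₂,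
    Matrix.toBlocks_fromBlocks₂₂, Matrix.mul_zero, Matrix.zero_mul, Matrix.mul_one,
    Matrix.one_mul, Matrix.mul_neg, Matrix.neg_mul, add_zero, zero_add,
    Matrix.zero_apply] at h11 h12 h22
  exact ⟨(add_neg_eq_zero.mp h11).symm, (add_neg_eq_zero.mp h22).symm,
    by linear_combination (norm := noncomm_ring) -h12⟩

lemma F_def (M : Matrix (Fin g) (Fin g) ℤ) :
    M.map (Int.cast : ℤ → ZMod 2) = F M := rfl

lemma F_sub (M N : Matrix (Fin g) (Fin g) ℤ) : F (M - N) = F M + F N := by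
  ext i j; simp [F, sub_eq_add_neg, CharTwo.neg_eq]

end ThetaAux

end ThetaAuxSec

open ThetaAux

variable (g : ℕ)

/-- The action of γ = (A B; C D) ∈ Sp(2g,ℤ) on theta characteristics
m = (m'; m'') ∈ 𝔽₂^{2g}:
γ·m = ((D m' - C m'') + diag(CᵗD); (-B m' + A m'') + diag(AᵗB)) mod 2. -/
def thetaCharAction (γ : Matrix (Fin g ⊕ Fin g) (Fin g ⊕ Fin g) ℤ)
    (m : (Fin g → ZMod 2) × (Fin g → ZMod 2)) :
    (Fin g → ZMod 2) × (Fin g → ZMod 2) :=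
  ((γ.toBlocks₂₂.map (Int.cast : ℤ → ZMod 2)) *ᵥ m.1
      - (γ.toBlocks₂₁.map (Int.cast : ℤ → ZMod 2)) *ᵥ m.2
      + fun i => (((γ.toBlocks₂₁ * γ.toBlocks₂₂ᵀ) i i : ℤ) : ZMod 2),
   -((γ.toBlocks₁₂.map (Int.cast : ℤ → ZMod 2)) *ᵥ m.1)
      + (γ.toBlocks₁₁.map (Int.cast : ℤ → ZMod 2)) *ᵥ m.2
      + fun i => (((γ.toBlocks₁₁ * γ.toBlocks₁₂ᵀ) i i : ℤ) : ZMod 2))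

/-- the above formula defines a group action of Sp(2g,ℤ) on 𝔽₂^{2g}:
(γβ)·m = γ·(β·m). -/
theorem thetaCharAction_mul (γ β : Matrix (Fin g ⊕ Fin g) (Fin g ⊕ Fin g) ℤ)
    (hγ : γ ∈ Matrix.symplecticGroup (Fin g) ℤ)
    (hβ : β ∈ Matrix.symplecticGroup (Fin g) ℤ)
    (m : (Fin g → ZMod 2) × (Fin g → ZMod 2)) :
    thetaCharAction g (γ * β) m = thetaCharAction g γ (thetaCharAction g β m) := by
  obtain ⟨h1, h2, h3⟩ := sympl_blocks hβ
  have H1 : F β.toBlocks₁₁ * (F β.toBlocks₁₂)ᵀ = F β.toBlocks₁₂ * (F β.toBlocks₁₁)ᵀ := by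
    rw [← F_transpose, ← F_mul, ← F_transpose, ← F_mul, h1]
  have H2 : F β.toBlocks₂₁ * (F β.toBlocks₂₂)ᵀ = F β.toBlocks₂₂ * (F β.toBlocks₂₁)ᵀ := by
    rw [← F_transpose, ← F_mul, ← F_transpose, ← F_mul, h2]
  have H3 : F β.toBlocks₁₁ * (F β.toBlocks₂₂)ᵀ + F β.toBlocks₁₂ * (F β.toBlocks₂₁)ᵀ = 1 := by
    have h := congrArg F h3
    rw [F_sub, F_one, F_mul, F_mul, F_transpose, F_transpose] at h
    exact h
  unfold thetaCharAction
  rw [Prod.mk.injEq]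
  constructor
  · dsimp only
    simp only [F_def, dg_F, mul_toBlocks₂₁, mul_toBlocks₂₂, F_add, F_mul, F_transpose,
      sub_vec, neg_vec]
    rw [crux _ _ _ _ _ _ H1 H2 H3]
    simp only [Matrix.add_mulVec, ← Matrix.mulVec_mulVec, Matrix.mulVec_add]
    abel
  · dsimp only
    simp only [F_def, dg_F, mul_toBlocks₁₁, mul_toBlocks₁₂, F_add, F_mul, F_transpose,
      sub_vec, neg_vec]
    rw [crux _ _ _ _ _ _ H1 H2 H3]
    simp only [Matrix.add_mulVec, ← Matrix.mulVec_mulVec, Matrix.mulVec_add]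
    abel
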